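/- arXiv:1602.03124 — 2 statements merged into one kernel-verified Lean document; each statement's English description precedes it below -/
import Mathlib

section
/- Let M ⊆ {0,1}^V be an interference-free Δ-matroid. If the set Even(M) of all tuples of M with an even number of ones is nonempty, then Even(M) is a Δ-matroid; likewise, if the set Odd(M) of all tuples of M with an odd number of ones is nonempty, then Odd(M) is a Δ-matroid. -/
/-- Flip the values of a Boolean tuple on a finite set of coordinates. -/
def flipS {V : Type*} [DecidableEq V] (α : V → Bool) (S : Finset V) : V → Bool :=
  fun v => if v ∈ S then !(α v) else α v

/-- Flip the value of a Boolean tuple at a single coordinate. -/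
def flip1 {V : Type*} [DecidableEq V] (α : V → Bool) (u : V) : V → Bool :=
  flipS α {u}

/-- `M` is a Δ-matroid. -/
def IsDeltaMatroid {V : Type*} [DecidableEq V] (M : Set (V → Bool)) : Prop :=
  M.Nonempty ∧ ∀ α ∈ M, ∀ β ∈ M, ∀ v, α v ≠ β v →
    ∃ u, α u ≠ β u ∧ flipS α {u, v} ∈ M

/-- Number of ones in a Boolean tuple. -/
def numOnes {V : Type*} [Fintype V] (α : V → Bool) : ℕ :=
  (Finset.univ.filter fun v => α v = true).card

/-- `M` is an even Δ-matroid. -/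
def IsEvenDeltaMatroid {V : Type*} [Fintype V] [DecidableEq V] (M : Set (V → Bool)) : Prop :=
  IsDeltaMatroid M ∧ ∀ α ∈ M, ∀ β ∈ M, numOnes α % 2 = numOnes β % 2

/-- `α` and `β` are even-neighbors with respect to `M`. -/
def EvenNeighbors {V : Type*} [DecidableEq V] (M : Set (V → Bool)) (α β : V → Bool) : Prop :=
  ∃ u v, u ≠ v ∧ β = flip1 (flip1 α u) v ∧ flip1 α u ∉ M

/-- Reachability via chains of even-neighbors inside `M`. -/
def Reachable {V : Type*} [DecidableEq V] (M : Set (V → Bool)) :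
    (V → Bool) → (V → Bool) → Prop :=
  Relation.ReflTransGen (fun x y => x ∈ M ∧ y ∈ M ∧ EvenNeighbors M x y)

/-- `M` is coverable. -/
def Coverable {V : Type*} [Fintype V] [DecidableEq V] (M : Set (V → Bool)) : Prop :=
  ∀ α ∈ M, ∃ Mα : Set (V → Bool),
    IsEvenDeltaMatroid Mα ∧
    (∀ β ∈ M, Reachable M α β → β ∈ Mα) ∧
    (∀ γ ∈ M, Reachable M α γ → ∀ u v,
      flip1 (flip1 γ u) v ∈ Mα → flip1 (flip1 γ u) v ∉ M →
      flip1 γ u ∈ M ∧ flip1 γ v ∈ M)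

/-- Direct product of two sets of tuples on disjoint ground sets. -/
def prodSet {U V : Type*} (M : Set (U → Bool)) (N : Set (V → Bool)) :
    Set (U ⊕ V → Bool) :=
  {h | (fun u => h (Sum.inl u)) ∈ M ∧ (fun v => h (Sum.inr v)) ∈ N}

/-- `M` is an even-zebra Δ-matroid. -/
def IsEvenZebra {V : Type*} [Fintype V] [DecidableEq V] (M : Set (V → Bool)) : Prop :=
  ∀ α ∈ M, ∃ Mα : Set (V → Bool),
    IsEvenDeltaMatroid Mα ∧
    (∀ β ∈ M, numOnes β % 2 = numOnes α % 2 → β ∈ Mα) ∧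
    (∀ β ∈ M, ∀ u v, flip1 (flip1 β u) v ∈ Mα → flip1 (flip1 β u) v ∉ M →
      flip1 β u ∈ M ∧ flip1 β v ∈ M)

/-- Identification of two variables of `M`. -/
def identify {U : Type*} [DecidableEq U] (M : Set (U → Bool)) (w₁ w₂ : U) :
    Set ({x : U // x ≠ w₁ ∧ x ≠ w₂} → Bool) :=
  {g | ∃ β ∈ M, β w₁ = β w₂ ∧ ∀ x : {x : U // x ≠ w₁ ∧ x ≠ w₂}, g x = β x.val}



/-- The interference Δ-matroid `{000, 110, 101, 011, 111}`. -/
def InterferenceM : Set (Fin 3 → Bool) :=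
  {![false, false, false], ![true, true, false], ![true, false, true],
   ![false, true, true], ![true, true, true]}

/-- The minor of `M` obtained by fixing the variables in `D` to the values given by `ρ`
and deleting them.  (A sequence of single fix-and-delete operations amounts to one such
simultaneous operation.) -/
def minorOf {V : Type*} [DecidableEq V] (M : Set (V → Bool)) (D : Finset V)
    (ρ : V → Bool) : Set ({x : V // x ∉ D} → Bool) :=
  {g | ∃ α ∈ M, (∀ x ∈ D, α x = ρ x) ∧ ∀ x : {x : V // x ∉ D}, g x = α x.val}

/-- `M` is interference-free: no minor of `M` is isomorphic to the interference
Δ-matroid, where isomorphism allows renaming the variables (the equivalence `e`) and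
flipping the values `0` and `1` at some variables (the pattern `s`). -/
def InterferenceFree {V : Type*} [DecidableEq V] (M : Set (V → Bool)) : Prop :=
  ¬ ∃ (D : Finset V) (ρ : V → Bool) (e : Fin 3 ≃ {x : V // x ∉ D}) (s : Fin 3 → Bool),
      minorOf M D ρ = {g | (fun i => xor (g (e i)) (s i)) ∈ InterferenceM}

/-!
It suffices to show: if `α` and `α ⊕ d` lie in `M`, `|d|` is even and `v ∈ d`, then
`α ⊕ {u, v} ∈ M` for some `u ∈ d \ {v}`; exchanging within such a pair preserves parity.
This goes by strong induction on `|d|`. In a minimal counterexample (`|d| = 4` or `|d| ≥ 6`)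
the exchange axiom and the induction hypothesis pin down, for a suitable 3-set `A ⊆ d`, which of
the tuples `α ⊕ (d \ C)`, `C ⊆ A`, lie in `M`: exactly those with `|C| ≠ 2`. Around
`γ = α ⊕ (d \ A)` these are the flips of `γ` on `A` of size other than one, i.e. the minor of
`M` fixing everything outside `A` to `γ` is a copy of the interference Δ-matroid.
-/

open Finset
open scoped symmDiff

section Flip

variable {V : Type*} [DecidableEq V]

lemma flipS_empty (α : V → Bool) : flipS α ∅ = α := by
  funext w; simp [flipS]

lemma flipS_flipS (α : V → Bool) (S T : Finset V) :
    flipS (flipS α S) T = flipS α (S ∆ T) := by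
  funext w
  by_cases hS : w ∈ S <;> by_cases hT : w ∈ T <;> simp [flipS, hS, hT, mem_symmDiff]

lemma flipS_apply_ne_flipS_apply_iff {α : V → Bool} {S T : Finset V} {v : V} :
    flipS α S v ≠ flipS α T v ↔ v ∈ S ∆ T := by
  by_cases hS : v ∈ S <;> by_cases hT : v ∈ T <;> simp [flipS, hS, hT, mem_symmDiff]

lemma IsDeltaMatroid.exists_flipS_symmDiff_mem {M : Set (V → Bool)} (hM : IsDeltaMatroid M)
    {α : V → Bool} {S T : Finset V} (hS : flipS α S ∈ M) (hT : flipS α T ∈ M) {v : V}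
    (hv : v ∈ S ∆ T) : ∃ u ∈ S ∆ T, flipS α (S ∆ {u, v}) ∈ M := by
  obtain ⟨u, hu, hmem⟩ := hM.2 _ hS _ hT v (flipS_apply_ne_flipS_apply_iff.2 hv)
  exact ⟨u, flipS_apply_ne_flipS_apply_iff.1 hu, flipS_flipS α S {u, v} ▸ hmem⟩

end Flip

section Parity

variable {V : Type*} [Fintype V]

def diffSet (α β : V → Bool) : Finset V := {v | α v ≠ β v}

@[simp] lemma mem_diffSet {α β : V → Bool} {v : V} : v ∈ diffSet α β ↔ α v ≠ β v := by
  simp [diffSet]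

lemma flipS_diffSet [DecidableEq V] (α β : V → Bool) : flipS α (diffSet α β) = β := by
  funext w
  cases ha : α w <;> cases hb : β w <;> simp [flipS, ha, hb]

lemma numOnes_flipS_mod_two [DecidableEq V] (α : V → Bool) (S : Finset V) :
    numOnes (flipS α S) % 2 = (numOnes α + #S) % 2 := by
  set X : Finset V := {v | α v = true}
  have hX : ({v | flipS α S v = true} : Finset V) = X ∆ S := by
    ext w; by_cases hw : w ∈ S <;> simp [X, flipS, hw, mem_symmDiff]
  have hcard : #(X ∆ S) + 2 * #(X ∩ S) = #X + #S := by
    rw [symmDiff_eq_sup_sdiff_inf, sup_eq_union, inf_eq_inter,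
      card_sdiff_of_subset inter_subset_union]
    have := card_union_add_card_inter X S
    have := card_le_card (inter_subset_union : X ∩ S ⊆ X ∪ S)
    omega
  change #({v | flipS α S v = true} : Finset V) % 2 = (#X + #S) % 2
  rw [hX]
  omega

lemma card_diffSet_mod_two [DecidableEq V] (α β : V → Bool) :
    #(diffSet α β) % 2 = (numOnes α + numOnes β) % 2 := by
  have := numOnes_flipS_mod_two α (diffSet α β)
  rw [flipS_diffSet] at this
  omega

end Parity

lemma mem_interferenceM_iff (p : Fin 3 → Bool) : p ∈ InterferenceM ↔ numOnes p ≠ 1 := by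
  simp only [InterferenceM, Set.mem_insert_iff, Set.mem_singleton_iff]
  revert p
  decide

section Minor

variable {V : Type*} [DecidableEq V]

lemma mem_minorOf_iff {M : Set (V → Bool)} {D : Finset V} {ρ : V → Bool}
    {g : {x : V // x ∉ D} → Bool} :
    g ∈ minorOf M D ρ ↔ (fun w => if hw : w ∈ D then ρ w else g ⟨w, hw⟩) ∈ M := by
  constructor
  · rintro ⟨α, hα, hρ, hg⟩
    convert hα using 1
    funext w
    by_cases hw : w ∈ D
    · simp [hw, hρ w hw]
    · simp [hw, hg ⟨w, hw⟩]
  · intro h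
    exact ⟨_, h, fun w hw => by simp [hw], fun w => by simp [w.2]⟩

lemma not_interferenceFree_of_flipS_mem_iff [Fintype V] {M : Set (V → Bool)} {γ : V → Bool}
    {A : Finset V} (hA : #A = 3) (h : ∀ T ⊆ A, flipS γ T ∈ M ↔ #T ≠ 1) :
    ¬ InterferenceFree M := by
  have hcard : Fintype.card {x : V // x ∉ Aᶜ} = 3 := by simpa using hA
  set e : Fin 3 ≃ {x : V // x ∉ Aᶜ} := (Fintype.equivFinOfCardEq hcard).symm
  refine not_not.2 ⟨Aᶜ, γ, e, fun i => γ (e i), ?_⟩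
  ext g
  set p : Fin 3 → Bool := fun i => xor (g (e i)) (γ (e i))
  set T : Finset V :=
    ({i | p i = true} : Finset (Fin 3)).map (e.toEmbedding.trans (Function.Embedding.subtype _))
  have hTA : T ⊆ A := by
    intro w hw
    obtain ⟨i, -, rfl⟩ := mem_map.1 hw
    simpa using (e i).2
  have hflip : (fun w => if hw : w ∈ Aᶜ then γ w else g ⟨w, hw⟩) = flipS γ T := by
    funext w
    by_cases hw : w ∈ Aᶜ
    · have : w ∉ T := fun hwT => (mem_compl.1 hw) (hTA hwT)
      simp [hw, flipS, this]
    · have hwT : w ∈ T ↔ p (e.symm ⟨w, hw⟩) = true := by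
        simp only [T, mem_map, mem_filter, mem_univ, true_and]
        constructor
        · rintro ⟨i, hi, rfl⟩; simpa using hi
        · intro hi; exact ⟨_, hi, by simp⟩
      have : p (e.symm ⟨w, hw⟩) = xor (g ⟨w, hw⟩) (γ w) := by simp [p]
      rw [this] at hwT
      simp only [flipS, dif_neg hw, propext hwT]
      cases g ⟨w, hw⟩ <;> cases γ w <;> rfl
  rw [mem_minorOf_iff, Set.mem_ofPred_eq, mem_interferenceM_iff, hflip, h T hTA, card_map]
  rfl

end Minor

lemma not_interferenceFree_of_flipS_sdiff {V : Type*} [Fintype V] [DecidableEq V]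
    {M : Set (V → Bool)} {α : V → Bool} {d A : Finset V} (hAd : A ⊆ d) (hA : #A = 3)
    (h0 : flipS α d ∈ M) (h1 : ∀ a ∈ A, flipS α (d \ {a}) ∈ M)
    (h2 : ∀ a ∈ A, ∀ b ∈ A, a ≠ b → flipS α (d \ {a, b}) ∉ M)
    (h3 : flipS α (d \ A) ∈ M) :
    ¬ InterferenceFree M := by
  have hC : ∀ C ⊆ A, flipS α (d \ C) ∈ M ↔ #C ≠ 2 := by
    intro C hC
    have : #C ≤ 3 := hA ▸ card_le_card hC
    interval_cases hc : #C
    · simpa [card_eq_zero.1 hc] using h0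
    · obtain ⟨a, rfl⟩ := card_eq_one.1 hc
      simpa using h1 a (hC (mem_singleton_self a))
    · obtain ⟨a, b, hab, rfl⟩ := card_eq_two.1 hc
      simpa using h2 a (hC (by simp)) b (hC (by simp)) hab
    · simpa [eq_of_subset_of_card_le hC (by omega)] using h3
  refine not_interferenceFree_of_flipS_mem_iff hA (γ := flipS α (d \ A)) fun T hT => ?_
  have hset : (d \ A) ∆ T = d \ (A \ T) := by
    ext w
    have := @hAd w
    have := @hT w
    simp only [mem_symmDiff, mem_sdiff]
    tauto
  rw [flipS_flipS, hset, hC _ sdiff_subset, card_sdiff_of_subset hT, hA]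
  omega

section EvenExchange

variable {V : Type*} [DecidableEq V]

def EvenExchangeBelow (M : Set (V → Bool)) (n : ℕ) : Prop :=
  ∀ α ∈ M, ∀ d : Finset V, flipS α d ∈ M → Even #d → #d < n →
    ∀ v ∈ d, ∃ u ∈ d, u ≠ v ∧ flipS α {u, v} ∈ M

structure EvenExchangeCounterexample (M : Set (V → Bool)) (α : V → Bool) (d : Finset V)
    (v : V) : Prop where
  base_mem : α ∈ M
  flipS_mem : flipS α d ∈ M
  even_card : Even #d
  mem : v ∈ d
  no_exchange : ∀ u ∈ d, u ≠ v → flipS α {u, v} ∉ M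

variable {M : Set (V → Bool)} {α : V → Bool} {d : Finset V}

lemma exists_flipS_sdiff_pair_mem (hM : IsDeltaMatroid M) {T : Finset V}
    (hd : flipS α d ∈ M) (hT : flipS α T ∈ M) (hTd : T ⊆ d) {w : V} (hw : w ∈ d \ T) :
    ∃ u ∈ d \ T, flipS α (d \ {u, w}) ∈ M := by
  have hdT : d ∆ T = d \ T := symmDiff_of_ge hTd
  obtain ⟨u, hu, hmem⟩ := hM.exists_flipS_symmDiff_mem hd hT (hdT ▸ hw)
  rw [hdT] at hu
  have hsub : {u, w} ⊆ d :=
    insert_subset (mem_sdiff.1 hu).1 (singleton_subset_iff.2 (mem_sdiff.1 hw).1)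
  exact ⟨u, hu, symmDiff_of_ge hsub ▸ hmem⟩

namespace EvenExchangeCounterexample

variable {v : V}

lemma even_card_sub_two (h : EvenExchangeCounterexample M α d v) : Even (#d - 2) := by
  have := h.even_card
  rw [Nat.even_iff] at *
  omega

lemma two_lt_card (h : EvenExchangeCounterexample M α d v) : 2 < #d := by
  have hpos : 0 < #d := card_pos.2 ⟨v, h.mem⟩
  have := Nat.even_iff.1 h.even_card
  by_contra! hle
  obtain ⟨u, hu, huv⟩ := exists_mem_ne (by omega : 1 < #d) v
  have hd : {u, v} = d :=
    eq_of_subset_of_card_le (insert_subset hu (singleton_subset_iff.2 h.mem))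
      (by rw [card_pair huv]; omega)
  exact h.no_exchange u hu huv (hd ▸ h.flipS_mem)

lemma flipS_singleton_mem (h : EvenExchangeCounterexample M α d v) (hM : IsDeltaMatroid M) :
    flipS α {v} ∈ M := by
  obtain ⟨u, hu, hmem⟩ := hM.exists_flipS_symmDiff_mem (S := ∅) (v := v)
    ((flipS_empty α).symm ▸ h.base_mem) h.flipS_mem (by simpa [mem_symmDiff] using h.mem)
  simp only [← bot_eq_empty, bot_symmDiff] at hu hmem
  by_cases huv : u = v
  · simpa [huv] using hmem
  · exact absurd hmem (h.no_exchange u hu huv)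

lemma flipS_notMem_of_subset (h : EvenExchangeCounterexample M α d v)
    (IH : EvenExchangeBelow M #d) {S : Finset V} (hSd : S ⊆ d) (hvS : v ∈ S) (hS : #S < #d)
    (hSeven : Even #S) : flipS α S ∉ M := fun hSM => by
  obtain ⟨u, hu, huv, hmem⟩ := IH α h.base_mem S hSM hSeven hS v hvS
  exact h.no_exchange u (hSd hu) huv hmem

lemma flipS_sdiff_singleton_mem (h : EvenExchangeCounterexample M α d v)
    (hM : IsDeltaMatroid M) (IH : EvenExchangeBelow M #d) {w : V} (hw : w ∈ d) (hwv : w ≠ v) :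
    flipS α (d \ {w}) ∈ M := by
  obtain ⟨s, hs, hmem⟩ := exists_flipS_sdiff_pair_mem hM h.flipS_mem (h.flipS_singleton_mem hM)
    (singleton_subset_iff.2 h.mem) (w := w) (by simp [hw, hwv])
  rw [mem_sdiff, mem_singleton] at hs
  by_cases hsw : s = w
  · simpa [hsw] using hmem
  · have hsub : {s, w} ⊆ d := insert_subset hs.1 (singleton_subset_iff.2 hw)
    refine absurd hmem (h.flipS_notMem_of_subset IH sdiff_subset ?_ ?_ ?_)
    · simp [h.mem, Ne.symm hs.2, Ne.symm hwv]
    · rw [card_sdiff_of_subset hsub, card_pair hsw]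
      have := h.two_lt_card
      omega
    · rw [card_sdiff_of_subset hsub, card_pair hsw]
      exact h.even_card_sub_two

lemma not_interferenceFree_of_card_eq_four [Fintype V] (h : EvenExchangeCounterexample M α d v)
    (hM : IsDeltaMatroid M) (IH : EvenExchangeBelow M #d) (h4 : #d = 4) :
    ¬ InterferenceFree M := by
  have hvd : {v} ⊆ d := singleton_subset_iff.2 h.mem
  refine not_interferenceFree_of_flipS_sdiff (A := d \ {v}) sdiff_subset
    (by rw [card_sdiff_of_subset hvd, h4, card_singleton]) h.flipS_mem ?_ ?_ ?_
  · intro a ha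
    rw [mem_sdiff, mem_singleton] at ha
    exact h.flipS_sdiff_singleton_mem hM IH ha.1 ha.2
  · intro a ha b hb hab
    rw [mem_sdiff, mem_singleton] at ha hb
    have hsub : {a, b} ⊆ d := insert_subset ha.1 (singleton_subset_iff.2 hb.1)
    refine h.flipS_notMem_of_subset IH sdiff_subset (by simp [h.mem, Ne.symm ha.2, Ne.symm hb.2])
      ?_ ?_ <;> rw [card_sdiff_of_subset hsub, card_pair hab, h4]
    · decide
    · decide
  · simpa [sdiff_sdiff_right_self, h.mem] using h.flipS_singleton_mem hM

lemma flipS_pair_notMem (h : EvenExchangeCounterexample M α d v) (IH : EvenExchangeBelow M #d)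
    (h6 : 6 ≤ #d) {s t : V} (hs : s ∈ d) (ht : t ∈ d) (hsv : s ≠ v) (htv : t ≠ v)
    (hst : s ≠ t) :
    flipS α {s, t} ∉ M := by
  intro hst_mem
  have hsub : {s, t} ⊆ d := insert_subset hs (singleton_subset_iff.2 ht)
  have hcard : #(d \ {s, t}) = #d - 2 := by rw [card_sdiff_of_subset hsub, card_pair hst]
  obtain ⟨u, hu, huv, hmem⟩ := IH _ hst_mem (d \ {s, t})
    (by rw [flipS_flipS, symmDiff_sdiff_eq_sup, sup_eq_union, union_eq_right.2 hsub]
        exact h.flipS_mem)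
    (hcard ▸ h.even_card_sub_two) (by omega) v (by simp [h.mem, hsv.symm, htv.symm])
  simp only [mem_sdiff, mem_insert, mem_singleton, not_or] at hu
  have hdisj : Disjoint ({s, t} : Finset V) {u, v} := by
    simp [hu.2.1, hu.2.2, hsv.symm, htv.symm]
  rw [flipS_flipS, hdisj.symmDiff_eq_sup, sup_eq_union] at hmem
  refine h.flipS_notMem_of_subset IH
    (union_subset hsub (insert_subset hu.1 (singleton_subset_iff.2 h.mem))) (by simp) ?_ ?_ hmem
    <;> rw [card_union_of_disjoint hdisj, card_pair hst, card_pair huv]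
  · omega
  · decide

lemma flipS_sdiff_pair_notMem (h : EvenExchangeCounterexample M α d v)
    (IH : EvenExchangeBelow M #d) (h6 : 6 ≤ #d) {a b : V} (ha : a ∈ d) (hb : b ∈ d)
    (hab : a ≠ b) : flipS α (d \ {a, b}) ∉ M := by
  have hcard : ∀ {s t : V}, s ∈ d → t ∈ d → s ≠ t → #(d \ {s, t}) = #d - 2 :=
    fun hs ht hst => by
      rw [card_sdiff_of_subset (insert_subset hs (singleton_subset_iff.2 ht)), card_pair hst]
  have hv_pair : ∀ t ∈ d, t ≠ v → flipS α (d \ {v, t}) ∉ M := by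
    intro t ht htv hmem
    have hcard' := hcard h.mem ht htv.symm
    obtain ⟨c, hc⟩ : (d \ {v, t}).Nonempty := card_pos.1 (by omega)
    obtain ⟨u, hu, huc, humem⟩ :=
      IH α h.base_mem _ hmem (hcard' ▸ h.even_card_sub_two) (by omega) c hc
    simp only [mem_sdiff, mem_insert, mem_singleton, not_or] at hu hc
    exact h.flipS_pair_notMem IH h6 hu.1 hc.1 hu.2.1 hc.2.1 huc humem
  rcases eq_or_ne a v with rfl | hav
  · exact hv_pair b hb hab.symm
  rcases eq_or_ne b v with rfl | hbv
  · rw [pair_comm]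
    exact hv_pair a ha hav
  refine h.flipS_notMem_of_subset IH sdiff_subset (by simp [h.mem, hav.symm, hbv.symm])
    ?_ ?_ <;> rw [hcard ha hb hab]
  · omega
  · exact h.even_card_sub_two

lemma flipS_sdiff_singleton_mem_of_six_le (h : EvenExchangeCounterexample M α d v)
    (hM : IsDeltaMatroid M) (IH : EvenExchangeBelow M #d) (h6 : 6 ≤ #d) {w : V} (hw : w ∈ d) :
    flipS α (d \ {w}) ∈ M := by
  rcases ne_or_eq w v with hwv | rfl
  · exact h.flipS_sdiff_singleton_mem hM IH hw hwv
  obtain ⟨u, hu, hmem⟩ := exists_flipS_sdiff_pair_mem hM h.flipS_mem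
    ((flipS_empty α).symm ▸ h.base_mem) (empty_subset d) (w := w) (by simpa using hw)
  rw [sdiff_empty] at hu
  rcases eq_or_ne u w with rfl | huw
  · simpa using hmem
  · exact absurd hmem (h.flipS_sdiff_pair_notMem IH h6 hu hw huw)

lemma not_interferenceFree_of_six_le [Fintype V] (h : EvenExchangeCounterexample M α d v)
    (hM : IsDeltaMatroid M) (IH : EvenExchangeBelow M #d) (h6 : 6 ≤ #d) :
    ¬ InterferenceFree M := by
  obtain ⟨b, hb, hbv⟩ := exists_mem_ne (by omega : 1 < #d) v
  obtain ⟨c, hc, hmem⟩ := exists_flipS_sdiff_pair_mem hM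
    (h.flipS_sdiff_singleton_mem_of_six_le hM IH h6 h.mem) ((flipS_empty α).symm ▸ h.base_mem)
    (empty_subset _) (w := b) (by simp [hb, hbv])
  simp only [sdiff_empty, mem_sdiff, mem_singleton] at hc
  rw [sdiff_sdiff_left, sup_eq_union, ← insert_eq] at hmem
  have hcb : c ≠ b := by
    rintro rfl
    exact h.flipS_sdiff_pair_notMem IH h6 h.mem hb hbv.symm (by simpa using hmem)
  have hA : {v, c, b} ⊆ d := by simp [insert_subset_iff, h.mem, hc.1, hb]
  refine not_interferenceFree_of_flipS_sdiff hA ?_ h.flipS_mem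
    (fun a ha => h.flipS_sdiff_singleton_mem_of_six_le hM IH h6 (hA ha))
    (fun a ha a' ha' haa' => h.flipS_sdiff_pair_notMem IH h6 (hA ha) (hA ha') haa') hmem
  rw [card_insert_of_notMem (by simp [Ne.symm hc.2, Ne.symm hbv]), card_pair hcb]

end EvenExchangeCounterexample

end EvenExchange

theorem evenExchangeBelow {V : Type*} [Fintype V] [DecidableEq V] {M : Set (V → Bool)}
    (hM : IsDeltaMatroid M) (hIF : InterferenceFree M) (n : ℕ) : EvenExchangeBelow M n := by
  induction n with
  | zero => exact fun _ _ d _ _ hlt => absurd hlt (Nat.not_lt_zero _)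
  | succ n IH =>
    intro α hα d hd heven hlt v hv
    rcases (Nat.lt_succ_iff.1 hlt).lt_or_eq with hlt | rfl
    · exact IH α hα d hd heven hlt v hv
    by_contra! hcon
    have h : EvenExchangeCounterexample M α d v := ⟨hα, hd, heven, hv, hcon⟩
    have := h.two_lt_card
    have := Nat.even_iff.1 heven
    rcases (by omega : #d = 4 ∨ 6 ≤ #d) with h4 | h6
    · exact h.not_interferenceFree_of_card_eq_four hM IH h4 hIF
    · exact h.not_interferenceFree_of_six_le hM IH h6 hIF

theorem IsDeltaMatroid.sep_numOnes_mod_two {V : Type*} [Fintype V] [DecidableEq V]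
    {M : Set (V → Bool)} (hM : IsDeltaMatroid M) (hIF : InterferenceFree M) (c : ℕ)
    (hne : {γ ∈ M | numOnes γ % 2 = c}.Nonempty) :
    IsDeltaMatroid {γ ∈ M | numOnes γ % 2 = c} := by
  refine ⟨hne, ?_⟩
  rintro α ⟨hα, hαc⟩ β ⟨hβ, hβc⟩ v hv
  have heven : Even #(diffSet α β) := Nat.even_iff.2 (by rw [card_diffSet_mod_two]; omega)
  obtain ⟨u, hu, huv, hmem⟩ := evenExchangeBelow hM hIF _ α hα (diffSet α β)
    (by rwa [flipS_diffSet]) heven (Nat.lt_succ_self _) v (mem_diffSet.2 hv)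
  refine ⟨u, mem_diffSet.1 hu, hmem, ?_⟩
  rw [numOnes_flipS_mod_two, card_pair huv]
  omega

/-- For an interference-free Δ-matroid `M`, if the set of even tuples of `M` is
nonempty then it is a Δ-matroid, and likewise for the set of odd tuples of `M`. -/
theorem interferenceFree_even_odd_deltaMatroid {V : Type} [Fintype V] [DecidableEq V]
    (M : Set (V → Bool)) (hM : IsDeltaMatroid M) (hIF : InterferenceFree M) :
    ({γ ∈ M | numOnes γ % 2 = 0}.Nonempty → IsDeltaMatroid {γ ∈ M | numOnes γ % 2 = 0}) ∧
    ({γ ∈ M | numOnes γ % 2 = 1}.Nonempty → IsDeltaMatroid {γ ∈ M | numOnes γ % 2 = 1}) :=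
  ⟨hM.sep_numOnes_mod_two hIF 0, hM.sep_numOnes_mod_two hIF 1⟩
end

section
/- Let M ⊆ {0,1}^U be a Δ-matroid and let w₁, w₂ ∈ U be distinct variables such that some β ∈ M satisfies β(w₁) = β(w₂). Then the identification M_{w₁=w₂} ⊆ {0,1}^{U ∖ {w₁,w₂}} is a Δ-matroid; moreover, if M is an even Δ-matroid, then so is M_{w₁=w₂}. -/
/-!
The tuples of `identify M w₁ w₂` are the restrictions of the tuples of `M` that agree on `w₁, w₂`.
Take two such tuples `α, β` and `v ∉ {w₁, w₂}` with `α v ≠ β v`. If the exchange axiom of `M`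
gives `α ⊕ {u, v} ∈ M` with `u ∉ {w₁, w₂}`, this restricts to the required exchange. If instead
`u = w` is one of the pair, with partner `w'`, then `α ⊕ {w, v}` and `β` still differ at `w'`, and
exchanging again at `w'` gives `α ⊕ {w, v} ⊕ {u', w'} ∈ M`, which agrees on `w, w'` again and
restricts to `α ⊕ {u', v}` (to `α ⊕ {v}` when `u' = w'`). Parity survives because a tuple agreeing
on `w₁, w₂` has an even number of ones there.
-/

section Flip

variable {V : Type*} [DecidableEq V]

lemma flipS_pair_apply (α : V → Bool) (a b x : V) :
    flipS α {a, b} x = if x = a ∨ x = b then !α x else α x := by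
  simp [flipS]

lemma flipS_pair_subtype {p : V → Prop} (α : V → Bool) (u v : Subtype p) :
    flipS (fun x : Subtype p => α x.1) {u, v} = fun x => flipS α {u.1, v.1} x.1 := by
  funext x
  simp only [flipS_pair_apply, Subtype.ext_iff]

end Flip

lemma numOnes_eq_add_numOnes_subtype {U : Type*} [Fintype U] [DecidableEq U] {w₁ w₂ : U}
    (hw : w₁ ≠ w₂) (β : U → Bool) :
    numOnes β = (β w₁).toNat + (β w₂).toNat
      + numOnes (fun x : {x : U // x ≠ w₁ ∧ x ≠ w₂} => β x.1) := by
  have hcompl : ∀ x, x ∈ ({w₁, w₂} : Finset U)ᶜ ↔ x ≠ w₁ ∧ x ≠ w₂ := by simp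
  simp only [numOnes, Finset.card_filter]
  rw [← Finset.sum_add_sum_compl {w₁, w₂}, Finset.sum_pair hw,
    Finset.sum_subtype _ hcompl (fun x => if β x = true then 1 else 0)]
  cases β w₁ <;> cases β w₂ <;> rfl

section Identify

variable {U : Type*} [DecidableEq U] {M : Set (U → Bool)} {w₁ w₂ : U}

lemma mem_identify_iff {g : {x : U // x ≠ w₁ ∧ x ≠ w₂} → Bool} :
    g ∈ identify M w₁ w₂ ↔ ∃ β ∈ M, β w₁ = β w₂ ∧ g = fun x => β x.1 := by
  simp only [identify, Set.mem_ofPred, funext_iff]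

lemma IsDeltaMatroid.exists_exchange_off_pair_of_flipS_mem (hM : IsDeltaMatroid M) {w w' : U}
    (hw : w ≠ w') {α β : U → Bool} (hβ : β ∈ M) (hαw : α w = α w')
    (hβw : β w = β w') (hαβw : α w ≠ β w) {v : U} (hvw : v ≠ w) (hvw' : v ≠ w')
    (hv : α v ≠ β v) (hflip : flipS α {w, v} ∈ M) :
    ∃ u, u ≠ w ∧ u ≠ w' ∧ α u ≠ β u ∧
      ∃ γ ∈ M, γ w = γ w' ∧ ∀ x, x ≠ w → x ≠ w' → γ x = flipS α {u, v} x := by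
  obtain ⟨u, hu, hγ⟩ := hM.2 _ hflip β hβ w' (by grind [flipS_pair_apply])
  have huw : u ≠ w := by
    rintro rfl
    exact hαβw (by simpa [flipS_pair_apply] using hu)
  have huv : u ≠ v := by
    rintro rfl
    exact hv (by simpa [flipS_pair_apply] using hu)
  by_cases huw' : u = w'
  · exact ⟨v, hvw, hvw', hv, _, hγ, by grind [flipS_pair_apply],
      fun x _ _ => by grind [flipS_pair_apply]⟩
  · exact ⟨u, huw, huw', by grind [flipS_pair_apply], _, hγ, by grind [flipS_pair_apply],
      fun x _ _ => by grind [flipS_pair_apply]⟩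

lemma IsDeltaMatroid.exists_exchange_off_pair (hM : IsDeltaMatroid M) (hw : w₁ ≠ w₂)
    {α β : U → Bool} (hα : α ∈ M) (hβ : β ∈ M) (hαw : α w₁ = α w₂) (hβw : β w₁ = β w₂)
    {v : U} (hvw₁ : v ≠ w₁) (hvw₂ : v ≠ w₂) (hv : α v ≠ β v) :
    ∃ u, u ≠ w₁ ∧ u ≠ w₂ ∧ α u ≠ β u ∧
      ∃ γ ∈ M, γ w₁ = γ w₂ ∧ ∀ x, x ≠ w₁ → x ≠ w₂ → γ x = flipS α {u, v} x := by
  obtain ⟨u, hu, hflip⟩ := hM.2 α hα β hβ v hv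
  by_cases huw₁ : u = w₁
  · subst huw₁
    exact hM.exists_exchange_off_pair_of_flipS_mem hw hβ hαw hβw hu hvw₁ hvw₂ hv hflip
  by_cases huw₂ : u = w₂
  · subst huw₂
    obtain ⟨u', hu'w₂, hu'w₁, hu', γ, hγ, hγw, hγx⟩ := hM.exists_exchange_off_pair_of_flipS_mem
      hw.symm hβ hαw.symm hβw.symm hu hvw₂ hvw₁ hv hflip
    exact ⟨u', hu'w₁, hu'w₂, hu', γ, hγ, hγw.symm, fun x h₁ h₂ => hγx x h₂ h₁⟩
  · exact ⟨u, huw₁, huw₂, hu, _, hflip, by grind [flipS_pair_apply], fun _ _ _ => rfl⟩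

theorem IsDeltaMatroid.identify (hM : IsDeltaMatroid M) (hw : w₁ ≠ w₂)
    (hne : ∃ β ∈ M, β w₁ = β w₂) : IsDeltaMatroid (identify M w₁ w₂) := by
  refine ⟨?_, ?_⟩
  · obtain ⟨β, hβ, hβw⟩ := hne
    exact ⟨_, mem_identify_iff.2 ⟨β, hβ, hβw, rfl⟩⟩
  simp only [mem_identify_iff]
  rintro _ ⟨α, hα, hαw, rfl⟩ _ ⟨β, hβ, hβw, rfl⟩ v hv
  obtain ⟨u, hu₁, hu₂, hu, γ, hγ, hγw, hγx⟩ :=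
    hM.exists_exchange_off_pair hw hα hβ hαw hβw v.2.1 v.2.2 hv
  refine ⟨⟨u, hu₁, hu₂⟩, hu, γ, hγ, hγw, ?_⟩
  rw [flipS_pair_subtype]
  funext x
  exact (hγx x x.2.1 x.2.2).symm

lemma numOnes_mod_two_eq_of_mem_identify [Fintype U]
    (hM : ∀ α ∈ M, ∀ β ∈ M, numOnes α % 2 = numOnes β % 2) (hw : w₁ ≠ w₂) :
    ∀ g ∈ identify M w₁ w₂, ∀ h ∈ identify M w₁ w₂, numOnes g % 2 = numOnes h % 2 := by
  simp only [mem_identify_iff]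
  rintro _ ⟨α, hα, hαw, rfl⟩ _ ⟨β, hβ, hβw, rfl⟩
  have hα' := numOnes_eq_add_numOnes_subtype hw α
  have hβ' := numOnes_eq_add_numOnes_subtype hw β
  have := hM α hα β hβ
  rw [hαw] at hα'
  rw [hβw] at hβ'
  omega

end Identify

/-- Identifying two distinct variables of a Δ-matroid (such that some tuple of `M` agrees
on the two variables) yields a Δ-matroid; moreover, identifying two variables of an even
Δ-matroid yields an even Δ-matroid. -/
theorem identify_deltaMatroid {U : Type} [Fintype U] [DecidableEq U]
    (M : Set (U → Bool)) (w₁ w₂ : U) (hw : w₁ ≠ w₂) (hne : ∃ β ∈ M, β w₁ = β w₂) :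
    (IsDeltaMatroid M → IsDeltaMatroid (identify M w₁ w₂)) ∧
    (IsEvenDeltaMatroid M → IsEvenDeltaMatroid (identify M w₁ w₂)) :=
  ⟨fun hM => hM.identify hw hne,
    fun hM => ⟨hM.1.identify hw hne, numOnes_mod_two_eq_of_mem_identify hM.2 hw⟩⟩
end
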